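/- Let X be a topological space, let α : X → X be a bijection such that α and α⁻¹ are Borel measurable, let F be a Banach function space on X satisfying condition Ω_α, and let w and 1/w both be weights on X. Suppose that for each compact subset K ⊆ X there are sequences (D_k), (E_k), (F_k) of Borel subsets of K and a strictly increasing sequence (n_k) of positive integers such that for each k: D_k = E_k ∪ F_k, E_k ∩ F_k = ∅, lim_{k→∞} ‖χ_{K∖D_k}‖_F = 0, lim_{k→∞} ‖χ_{D_k} · ∏_{s=1}^{n_k} (w∘α^{−s})‖_F = lim_{k→∞} ‖χ_{D_k} · (∏_{s=0}^{n_k−1} (w∘α^{s}))^{−1}‖_F = 0, and lim_{k→∞} ‖χ_{E_k} · ∏_{s=1}^{2n_k} (w∘α^{−s})‖_F = lim_{k→∞} ‖χ_{F_k} · (∏_{s=0}^{2n_k−1} (w∘α^{s}))^{−1}‖_F = 0. Then the sequence (C^{(n)}_{α,w})_{n∈ℕ₀} is topologically transitive on F. -/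

import Mathlib

/-!
For `f, f'` bounded with support in a compact `K`, take
`z_k = χ_{D_k} f + 2 Tⁿ(χ_{E_k} f') + 2 Sⁿ(χ_{F_k} f')` with `n = n_k`. As `SⁿTⁿ = TⁿSⁿ = 1`,
`C⁽ⁿ⁾ z_k = ½ Tⁿ(χ_{D_k} f) + ½ Sⁿ(χ_{D_k} f) + T²ⁿ(χ_{E_k} f') + S²ⁿ(χ_{F_k} f') + χ_{D_k} f'`.
Pointwise `Tᵐ u = (∏_{s<m} w∘αˢ) · (u ∘ αᵐ)`, so by `α`-invariance and solidity
`‖Tᵐ u‖ ≤ sup |u| · ‖χ_A ∏_{s=1}^{m} w∘α⁻ˢ‖` when `u` vanishes off `A`; likewise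
`‖Sᵐ u‖ ≤ sup |u| · ‖χ_A (∏_{s<m} w∘αˢ)⁻¹‖`. Hence all terms except `χ_{D_k} f'` tend to `0`, while
`χ_{D_k} f → f` and `χ_{D_k} f' → f'` because `‖χ_{K \ D_k}‖ → 0`. So `z_k → f` and
`C⁽ⁿᵏ⁾ z_k → f'`, and density of the bounded compactly supported functions gives transitivity.
-/

open Filter Topology

/-- A Banach function space on `X`: a Banach space `F` together with an injective linear
embedding into the Borel measurable functions `X → ℂ`. -/
structure BanachFunctionSpace (X : Type*) [TopologicalSpace X] [MeasurableSpace X]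
    (F : Type*) [NormedAddCommGroup F] [NormedSpace ℂ F] [CompleteSpace F] where
  toFunL : F →ₗ[ℂ] (X → ℂ)
  injective : Function.Injective toFunL
  measurable' : ∀ f : F, Measurable (toFunL f)

namespace BanachFunctionSpace

variable {X : Type*} [TopologicalSpace X] [MeasurableSpace X]
  {F : Type*} [NormedAddCommGroup F] [NormedSpace ℂ F] [CompleteSpace F]

/-- `F` is solid: it contains, with controlled norm, every measurable function dominated
pointwise by a member of `F`. -/
def IsSolid (B : BanachFunctionSpace X F) : Prop :=
  ∀ (f : F) (g : X → ℂ), Measurable g → (∀ x, ‖g x‖ ≤ ‖B.toFunL f x‖) →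
    ∃ g' : F, B.toFunL g' = g ∧ ‖g'‖ ≤ ‖f‖

/-- `F` is `α`-invariant: composition with `α` and `α⁻¹` preserves membership and the norm. -/
def IsInvariant (B : BanachFunctionSpace X F) (α : X ≃ X) : Prop :=
  ∀ f : F, (∃ g : F, B.toFunL g = B.toFunL f ∘ ⇑α ∧ ‖g‖ = ‖f‖) ∧
    (∃ g : F, B.toFunL g = B.toFunL f ∘ ⇑α.symm ∧ ‖g‖ = ‖f‖)

/-- The characteristic function of every compact subset of `X` belongs to `F`. -/
def HasCompactIndicators (B : BanachFunctionSpace X F) : Prop :=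
  ∀ E : Set X, IsCompact E → ∃ f : F, B.toFunL f = Set.indicator E 1

/-- The bounded compactly supported functions in `F` are dense in `F`. -/
def DenseBoundedCompact (B : BanachFunctionSpace X F) : Prop :=
  Dense {f : F | (∃ C : ℝ, ∀ x, ‖B.toFunL f x‖ ≤ C) ∧
    ∃ K : Set X, IsCompact K ∧ ∀ x ∉ K, B.toFunL f x = 0}

/-- Condition `Ω_α`. -/
def ConditionOmega (B : BanachFunctionSpace X F) (α : X ≃ X) : Prop :=
  B.IsSolid ∧ B.IsInvariant α ∧ B.HasCompactIndicators ∧ B.DenseBoundedCompact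

end BanachFunctionSpace

/-- `w` and `1/w` are both weights: `w` is Borel measurable, bounded above, and bounded
away from `0`. -/
def IsWeightPair {X : Type*} [MeasurableSpace X] (w : X → ℝ) : Prop :=
  Measurable w ∧ (∃ C : ℝ, ∀ x, w x ≤ C) ∧ ∃ c : ℝ, 0 < c ∧ ∀ x, c ≤ w x

/-- `α` is aperiodic: every compact set is eventually moved off itself by the iterates. -/
def Aperiodic {X : Type*} [TopologicalSpace X] (α : X ≃ X) : Prop :=
  ∀ K : Set X, IsCompact K → ∃ N : ℕ, 0 < N ∧ ∀ n ≥ N, (⇑α)^[n] '' K ∩ K = ∅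

/-- The cosine operator sequence `C⁽ⁿ⁾ = (1/2)(Tⁿ + Sⁿ)`. -/
noncomputable def cosOp {F : Type*} [NormedAddCommGroup F] [NormedSpace ℂ F]
    (T S : F →L[ℂ] F) (n : ℕ) : F →L[ℂ] F :=
  (2 : ℂ)⁻¹ • (T ^ n + S ^ n)

/-- The set of periodic elements of a sequence of operators. -/
def periodicSet {F : Type*} [NormedAddCommGroup F] [NormedSpace ℂ F]
    (C : ℕ → F →L[ℂ] F) : Set F :=
  {f | ∃ N : ℕ, 0 < N ∧ ∀ k : ℕ, 0 < k → C (k * N) f = f}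

/-- Topological transitivity of a sequence of operators. -/
def TopTransitive {F : Type*} [NormedAddCommGroup F] [NormedSpace ℂ F]
    (C : ℕ → F →L[ℂ] F) : Prop :=
  ∀ U V : Set F, IsOpen U → IsOpen V → U.Nonempty → V.Nonempty →
    ∃ n : ℕ, 0 < n ∧ (⇑(C n) '' U ∩ V).Nonempty

/-- A sequence of operators is chaotic if it is topologically transitive and its set of
periodic elements is dense. -/
def IsChaotic {F : Type*} [NormedAddCommGroup F] [NormedSpace ℂ F]
    (C : ℕ → F →L[ℂ] F) : Prop :=
  TopTransitive C ∧ Dense (periodicSet C)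

theorem Function.LeftInverse.prod_Icc_iterate_iterate {X M : Type*} [CommMonoid M]
    {f g : X → X} (hgf : Function.LeftInverse g f) (v : X → M) (n : ℕ) (x : X) :
    ∏ s ∈ Finset.Icc 1 n, v (g^[s] (f^[n] x)) = ∏ s ∈ Finset.range n, v (f^[s] x) := by
  refine Finset.prod_nbij' (n - ·) (n - ·) (by simp; omega) (by simp; omega)
    (by simp; omega) (by simp; omega) fun s hs => ?_
  have hsn : s + (n - s) = n := by simp at hs; omega
  rw [← hsn, Function.iterate_add_apply, (hgf.iterate s) _, hsn]

theorem Function.LeftInverse.prod_range_iterate_iterate {X M : Type*} [CommMonoid M]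
    {f g : X → X} (hgf : Function.LeftInverse g f) (v : X → M) (n : ℕ) (x : X) :
    ∏ s ∈ Finset.range n, v (g^[s] (f^[n] x)) = ∏ s ∈ Finset.range n, v (f^[s + 1] x) := by
  refine Finset.prod_nbij' (n - 1 - ·) (n - 1 - ·) (by simp; omega) (by simp; omega)
    (by simp; omega) (by simp; omega) fun s hs => ?_
  have hsn : s + (n - 1 - s + 1) = n := by simp at hs; omega
  rw [← hsn, Function.iterate_add_apply, (hgf.iterate s) _, hsn]

theorem ContinuousLinearMap.pow_apply_pow_apply_eq_self {F : Type*}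
    [NormedAddCommGroup F] [NormedSpace ℂ F] {T S : F →L[ℂ] F} (hST : ∀ f, S (T f) = f)
    (n : ℕ) (f : F) : (S ^ n) ((T ^ n) f) = f := by
  change (S ^ n * T ^ n) f = f
  rw [pow_mul_pow_eq_one n (ContinuousLinearMap.ext hST)]
  rfl

theorem norm_mul_indicator_le {X : Type*} {A D : Set X} (hAD : A ⊆ D) {f ψ : X → ℂ} {M : ℝ}
    (hf : ∀ y, ‖f y‖ ≤ M) (y : X) : ‖ψ y * A.indicator f y‖ ≤ M * ‖D.indicator ψ y‖ := by
  by_cases hy : y ∈ A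
  · rw [Set.indicator_of_mem hy, Set.indicator_of_mem (hAD hy), norm_mul, mul_comm]
    exact mul_le_mul_of_nonneg_right (hf y) (norm_nonneg _)
  · rw [Set.indicator_of_notMem hy, mul_zero, norm_zero]
    exact mul_nonneg ((norm_nonneg _).trans (hf y)) (norm_nonneg _)

namespace BanachFunctionSpace

variable {X : Type*} [TopologicalSpace X] [MeasurableSpace X]
  {F : Type*} [NormedAddCommGroup F] [NormedSpace ℂ F] [CompleteSpace F]
  {B : BanachFunctionSpace X F}

theorem IsSolid.exists_indicator (hsolid : B.IsSolid) (f : F) {A : Set X}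
    (hA : MeasurableSet A) : ∃ u : F, B.toFunL u = A.indicator (B.toFunL f) :=
  (hsolid f _ ((B.measurable' f).indicator hA) fun _ => norm_indicator_le_norm_self _ _).imp
    fun _ h => h.1

theorem IsSolid.norm_le_mul (hsolid : B.IsSolid) {u a : F} {M : ℝ}
    (h : ∀ x, ‖B.toFunL u x‖ ≤ M * ‖B.toFunL a x‖) : ‖u‖ ≤ M * ‖a‖ := by
  rcases le_or_gt 0 M with hM | hM
  · obtain ⟨v, hv, hvu⟩ := hsolid ((M : ℂ) • a) (B.toFunL u) (B.measurable' u) fun x => by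
      simpa [norm_smul, abs_of_nonneg hM] using h x
    rwa [B.injective hv, norm_smul, Complex.norm_real, Real.norm_of_nonneg hM] at hvu
  · -- a negative bound forces `u = a = 0`
    have ha : a = 0 := B.injective <| funext fun x => by
      simpa using nonpos_of_mul_nonneg_right ((norm_nonneg _).trans (h x)) hM
    have hu : u = 0 := B.injective <| funext fun x => by simpa [ha] using h x
    simp [ha, hu]

theorem IsInvariant.symm {α : X ≃ X} (hinv : B.IsInvariant α) : B.IsInvariant α.symm :=
  fun f => (hinv f).symm

theorem IsInvariant.exists_comp_iterate {α : X ≃ X} (hinv : B.IsInvariant α) (f : F) (n : ℕ) :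
    ∃ g : F, B.toFunL g = B.toFunL f ∘ (⇑α)^[n] ∧ ‖g‖ = ‖f‖ := by
  induction n with
  | zero => exact ⟨f, rfl, rfl⟩
  | succ n ih =>
    obtain ⟨g, hg, hgf⟩ := ih
    obtain ⟨g', hg', hg'g⟩ := (hinv g).1
    exact ⟨g', by rw [hg', hg, Function.iterate_succ]; rfl, hg'g.trans hgf⟩

theorem IsSolid.norm_le_mul_of_comp_iterate (hsolid : B.IsSolid) {α : X ≃ X}
    (hinv : B.IsInvariant α) {u a : F} {M : ℝ} (n : ℕ)
    (h : ∀ x, ‖B.toFunL u x‖ ≤ M * ‖B.toFunL a ((⇑α)^[n] x)‖) : ‖u‖ ≤ M * ‖a‖ := by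
  obtain ⟨a', ha', ha'a⟩ := hinv.exists_comp_iterate a n
  rw [← ha'a]
  exact hsolid.norm_le_mul fun x => by rw [ha']; exact h x

theorem toFunL_pow_apply {R : F →L[ℂ] F} {φ : X → ℂ} {β : X → X}
    (hR : ∀ f x, B.toFunL (R f) x = φ x * B.toFunL f (β x)) (n : ℕ) (f : F) (x : X) :
    B.toFunL ((R ^ n) f) x = (∏ s ∈ Finset.range n, φ (β^[s] x)) * B.toFunL f (β^[n] x) := by
  induction n generalizing f with
  | zero => simp
  | succ n ih =>
    rw [pow_succ]
    change B.toFunL ((R ^ n) (R f)) x = _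
    rw [ih, hR, Finset.prod_range_succ, Function.iterate_succ_apply', mul_assoc]

theorem toFunL_inverse_apply {α : X ≃ X} {w : X → ℝ} (hw : ∀ x, w x ≠ 0) {T S : F →L[ℂ] F}
    (hT : ∀ f x, B.toFunL (T f) x = (w x : ℂ) * B.toFunL f (α x)) (hTS : ∀ f, T (S f) = f)
    (f : F) (x : X) :
    B.toFunL (S f) x = ((w (α.symm x))⁻¹ : ℂ) * B.toFunL f (α.symm x) := by
  have h := hT (S f) (α.symm x)
  rw [hTS, Equiv.apply_symm_apply] at h
  rw [h, inv_mul_cancel_left₀ (by exact_mod_cast hw _)]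

theorem IsSolid.tendsto_weightedShift_pow_nhds_zero (hsolid : B.IsSolid) {α : X ≃ X}
    (hinv : B.IsInvariant α) {w : X → ℝ} {T : F →L[ℂ] F}
    (hT : ∀ f x, B.toFunL (T f) x = (w x : ℂ) * B.toFunL f (α x)) {n : ℕ → ℕ}
    {A D : ℕ → Set X} (hAD : ∀ k, A k ⊆ D k) {f : F} {M : ℝ} (hf : ∀ y, ‖B.toFunL f y‖ ≤ M)
    {u h : ℕ → F} (hu : ∀ k, B.toFunL (u k) = (A k).indicator (B.toFunL f))
    (hh : ∀ k, B.toFunL (h k) = (D k).indicator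
      (fun x => ((∏ s ∈ Finset.Icc 1 (n k), w ((⇑α.symm)^[s] x) : ℝ) : ℂ)))
    (hlim : Tendsto (fun k => ‖h k‖) atTop (𝓝 0)) :
    Tendsto (fun k => (T ^ n k) (u k)) atTop (𝓝 0) := by
  refine squeeze_zero_norm (fun k => hsolid.norm_le_mul_of_comp_iterate hinv (n k) fun x => ?_)
    (by simpa using hlim.const_mul M)
  have := norm_mul_indicator_le (hAD k) hf ((⇑α)^[n k] x)
    (ψ := fun y => ((∏ s ∈ Finset.Icc 1 (n k), w ((⇑α.symm)^[s] y) : ℝ) : ℂ))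
  rw [α.leftInverse_symm.prod_Icc_iterate_iterate, Complex.ofReal_prod] at this
  rwa [toFunL_pow_apply hT, hu, hh]

theorem IsSolid.tendsto_weightedShift_inv_pow_nhds_zero (hsolid : B.IsSolid) {α : X ≃ X}
    (hinv : B.IsInvariant α) {w : X → ℝ} (hw : ∀ x, w x ≠ 0) {T S : F →L[ℂ] F}
    (hT : ∀ f x, B.toFunL (T f) x = (w x : ℂ) * B.toFunL f (α x)) (hTS : ∀ f, T (S f) = f)
    {n : ℕ → ℕ} {A D : ℕ → Set X} (hAD : ∀ k, A k ⊆ D k) {f : F} {M : ℝ}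
    (hf : ∀ y, ‖B.toFunL f y‖ ≤ M) {u h : ℕ → F}
    (hu : ∀ k, B.toFunL (u k) = (A k).indicator (B.toFunL f))
    (hh : ∀ k, B.toFunL (h k) = (D k).indicator
      (fun x => (((∏ s ∈ Finset.range (n k), w ((⇑α)^[s] x))⁻¹ : ℝ) : ℂ)))
    (hlim : Tendsto (fun k => ‖h k‖) atTop (𝓝 0)) :
    Tendsto (fun k => (S ^ n k) (u k)) atTop (𝓝 0) := by
  refine squeeze_zero_norm
    (fun k => hsolid.norm_le_mul_of_comp_iterate hinv.symm (n k) fun x => ?_)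
    (by simpa using hlim.const_mul M)
  have := norm_mul_indicator_le (hAD k) hf ((⇑α.symm)^[n k] x)
    (ψ := fun y => (((∏ s ∈ Finset.range (n k), w ((⇑α)^[s] y))⁻¹ : ℝ) : ℂ))
  rw [α.rightInverse_symm.prod_range_iterate_iterate] at this
  rw [toFunL_pow_apply (toFunL_inverse_apply hw hT hTS), hu, hh]
  simpa [Finset.prod_inv_distrib, Function.iterate_succ_apply'] using this

theorem IsSolid.tendsto_of_indicator_diff (hsolid : B.IsSolid) {f : F} {M : ℝ}
    (hf : ∀ y, ‖B.toFunL f y‖ ≤ M) {K : Set X} (hfK : ∀ x ∉ K, B.toFunL f x = 0)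
    {D : ℕ → Set X} {u g : ℕ → F} (hu : ∀ k, B.toFunL (u k) = (D k).indicator (B.toFunL f))
    (hg : ∀ k, B.toFunL (g k) = (K \ D k).indicator 1)
    (hlim : Tendsto (fun k => ‖g k‖) atTop (𝓝 0)) : Tendsto u atTop (𝓝 f) := by
  refine tendsto_iff_norm_sub_tendsto_zero.2 <| squeeze_zero (fun _ => norm_nonneg _)
    (fun k => hsolid.norm_le_mul fun x => ?_) (by simpa using hlim.const_mul M)
  rw [map_sub, Pi.sub_apply, hu, hg]
  by_cases hxD : x ∈ D k
  · simp [hxD]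
  by_cases hxK : x ∈ K
  · simpa [hxD, hxK] using hf x
  · simp [hxD, hxK, hfK x hxK]

end BanachFunctionSpace

theorem tendsto_cosOp_of_tendsto {F : Type*} [NormedAddCommGroup F] [NormedSpace ℂ F]
    {T S : F →L[ℂ] F} (hST : ∀ f, S (T f) = f) (hTS : ∀ f, T (S f) = f) {n : ℕ → ℕ}
    {a b c : ℕ → F} {f f' : F} (ha : Tendsto a atTop (𝓝 f))
    (hbc : Tendsto (fun k => b k + c k) atTop (𝓝 f'))
    (hTa : Tendsto (fun k => (T ^ n k) (a k)) atTop (𝓝 0))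
    (hSa : Tendsto (fun k => (S ^ n k) (a k)) atTop (𝓝 0))
    (hTb : Tendsto (fun k => (T ^ n k) (b k)) atTop (𝓝 0))
    (hSc : Tendsto (fun k => (S ^ n k) (c k)) atTop (𝓝 0))
    (hTTb : Tendsto (fun k => (T ^ (2 * n k)) (b k)) atTop (𝓝 0))
    (hSSc : Tendsto (fun k => (S ^ (2 * n k)) (c k)) atTop (𝓝 0)) :
    Tendsto (fun k => a k + (2 : ℂ) • (T ^ n k) (b k) + (2 : ℂ) • (S ^ n k) (c k)) atTop (𝓝 f) ∧
    Tendsto (fun k => cosOp T S (n k)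
      (a k + (2 : ℂ) • (T ^ n k) (b k) + (2 : ℂ) • (S ^ n k) (c k))) atTop (𝓝 f') := by
  refine ⟨by simpa only [smul_zero, add_zero] using
    (ha.add (hTb.const_smul (2 : ℂ))).add (hSc.const_smul (2 : ℂ)), ?_⟩
  have hcos : ∀ k, cosOp T S (n k) (a k + (2 : ℂ) • (T ^ n k) (b k) + (2 : ℂ) • (S ^ n k) (c k))
      = (2 : ℂ)⁻¹ • (T ^ n k) (a k) + (2 : ℂ)⁻¹ • (S ^ n k) (a k) + (T ^ (2 * n k)) (b k)
        + (S ^ (2 * n k)) (c k) + (b k + c k) := fun k => by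
    have hTT : (T ^ (2 * n k)) (b k) = (T ^ n k) ((T ^ n k) (b k)) := by
      rw [two_mul, pow_add]; rfl
    have hSS : (S ^ (2 * n k)) (c k) = (S ^ n k) ((S ^ n k) (c k)) := by
      rw [two_mul, pow_add]; rfl
    simp only [cosOp, FunLike.coe_smul, FunLike.coe_add, Pi.smul_apply,
      Pi.add_apply, map_add, map_smul, hTT, hSS,
      ContinuousLinearMap.pow_apply_pow_apply_eq_self hST,
      ContinuousLinearMap.pow_apply_pow_apply_eq_self hTS]
    module
  refine Tendsto.congr (fun k => (hcos k).symm) ?_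
  simpa only [smul_zero, add_zero, zero_add] using
    ((((hTa.const_smul (2 : ℂ)⁻¹).add (hSa.const_smul (2 : ℂ)⁻¹)).add hTTb).add hSSc).add hbc

theorem topTransitive_of_tendsto {F : Type*} [NormedAddCommGroup F] [NormedSpace ℂ F]
    {C : ℕ → F →L[ℂ] F} {P : Set F} (hP : Dense P)
    (h : ∀ f ∈ P, ∀ f' ∈ P, ∃ (n : ℕ → ℕ) (z : ℕ → F), (∀ k, 0 < n k) ∧
      Tendsto z atTop (𝓝 f) ∧ Tendsto (fun k => C (n k) (z k)) atTop (𝓝 f')) :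
    TopTransitive C := by
  intro U V hU hV hUne hVne
  obtain ⟨f, hfP, hfU⟩ := hP.exists_mem_open hU hUne
  obtain ⟨f', hf'P, hf'V⟩ := hP.exists_mem_open hV hVne
  obtain ⟨n, z, hn, hz, hCz⟩ := h f hfP f' hf'P
  obtain ⟨k, hzk, hCzk⟩ :=
    ((hz.eventually (hU.mem_nhds hfU)).and (hCz.eventually (hV.mem_nhds hf'V))).exists
  exact ⟨n k, hn k, C (n k) (z k), Set.mem_image_of_mem _ hzk, hCzk⟩

theorem stmt5_general {X : Type*} [TopologicalSpace X] [MeasurableSpace X]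
    {F : Type*} [NormedAddCommGroup F] [NormedSpace ℂ F] [CompleteSpace F]
    (B : BanachFunctionSpace X F) (α : X ≃ X)
    (hΩ : B.ConditionOmega α)
    (w : X → ℝ) (hw : IsWeightPair w) (T : F →L[ℂ] F)
    (hT : ∀ (f : F) (x : X), B.toFunL (T f) x = (w x : ℂ) * B.toFunL f (α x)) (S : F →L[ℂ] F) (hST : ∀ f : F, S (T f) = f) (hTS : ∀ f : F, T (S f) = f)
    (hcond : ∀ K : Set X, IsCompact K →
      ∃ (D E' F' : ℕ → Set X) (nk : ℕ → ℕ) (g h₁ h₂ h₃ h₄ : ℕ → F),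
        (∀ k, MeasurableSet (D k) ∧ MeasurableSet (E' k) ∧ MeasurableSet (F' k)) ∧
        (∀ k, D k ⊆ K) ∧ (∀ k, E' k ⊆ K) ∧ (∀ k, F' k ⊆ K) ∧
        (∀ k, D k = E' k ∪ F' k) ∧ (∀ k, E' k ∩ F' k = ∅) ∧
        StrictMono nk ∧ (∀ k, 0 < nk k) ∧
        (∀ k, B.toFunL (g k) = Set.indicator (K \ D k) 1) ∧
        Tendsto (fun k => ‖g k‖) atTop (𝓝 0) ∧
        (∀ k, B.toFunL (h₁ k) = Set.indicator (D k)
          (fun x => ((∏ s ∈ Finset.Icc 1 (nk k), w ((⇑α.symm)^[s] x) : ℝ) : ℂ))) ∧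
        Tendsto (fun k => ‖h₁ k‖) atTop (𝓝 0) ∧
        (∀ k, B.toFunL (h₂ k) = Set.indicator (D k)
          (fun x => (((∏ s ∈ Finset.range (nk k), w ((⇑α)^[s] x))⁻¹ : ℝ) : ℂ))) ∧
        Tendsto (fun k => ‖h₂ k‖) atTop (𝓝 0) ∧
        (∀ k, B.toFunL (h₃ k) = Set.indicator (E' k)
          (fun x => ((∏ s ∈ Finset.Icc 1 (2 * nk k), w ((⇑α.symm)^[s] x) : ℝ) : ℂ))) ∧
        Tendsto (fun k => ‖h₃ k‖) atTop (𝓝 0) ∧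
        (∀ k, B.toFunL (h₄ k) = Set.indicator (F' k)
          (fun x => (((∏ s ∈ Finset.range (2 * nk k), w ((⇑α)^[s] x))⁻¹ : ℝ) : ℂ))) ∧
        Tendsto (fun k => ‖h₄ k‖) atTop (𝓝 0)) :
    TopTransitive (cosOp T S) := by
  obtain ⟨hsolid, hinv, -, hdense⟩ := hΩ
  obtain ⟨-, -, m, hm, hmw⟩ := hw
  have hw0 : ∀ x, w x ≠ 0 := fun x => (hm.trans_le (hmw x)).ne'
  refine topTransitive_of_tendsto hdense ?_
  rintro f ⟨⟨M, hM⟩, K, hK, hfK⟩ f' ⟨⟨M', hM'⟩, K', hK', hf'K⟩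
  obtain ⟨D, E', F', n, g, h₁, h₂, h₃, h₄, hmeas, -, -, -, hDEF, hEF, -, hn, hg, hgl,
    hh₁, hh₁l, hh₂, hh₂l, hh₃, hh₃l, hh₄, hh₄l⟩ := hcond _ (hK.union hK')
  choose a ha using fun k => hsolid.exists_indicator f (hmeas k).1
  choose b hb using fun k => hsolid.exists_indicator f' (hmeas k).2.1
  choose c hc using fun k => hsolid.exists_indicator f' (hmeas k).2.2
  have hED : ∀ k, E' k ⊆ D k := fun k => hDEF k ▸ Set.subset_union_left
  have hFD : ∀ k, F' k ⊆ D k := fun k => hDEF k ▸ Set.subset_union_right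
  have hbc : ∀ k, B.toFunL (b k + c k) = (D k).indicator (B.toFunL f') := fun k => by
    rw [map_add, hb, hc, hDEF k,
      Set.indicator_union_of_disjoint (Set.disjoint_iff_inter_eq_empty.2 (hEF k))]
    rfl
  refine ⟨n, _, hn, tendsto_cosOp_of_tendsto hST hTS
    (hsolid.tendsto_of_indicator_diff hM (fun x hx => hfK x fun h => hx (.inl h)) ha hg hgl)
    (hsolid.tendsto_of_indicator_diff hM' (fun x hx => hf'K x fun h => hx (.inr h)) hbc hg hgl)
    (hsolid.tendsto_weightedShift_pow_nhds_zero hinv hT (fun _ => subset_rfl) hM ha hh₁ hh₁l)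
    (hsolid.tendsto_weightedShift_inv_pow_nhds_zero hinv hw0 hT hTS (fun _ => subset_rfl) hM ha
      hh₂ hh₂l)
    (hsolid.tendsto_weightedShift_pow_nhds_zero hinv hT hED hM' hb hh₁ hh₁l)
    (hsolid.tendsto_weightedShift_inv_pow_nhds_zero hinv hw0 hT hTS hFD hM' hc hh₂ hh₂l)
    (hsolid.tendsto_weightedShift_pow_nhds_zero hinv hT (fun _ => subset_rfl) hM' hb hh₃ hh₃l)
    (hsolid.tendsto_weightedShift_inv_pow_nhds_zero hinv hw0 hT hTS (fun _ => subset_rfl) hM' hc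
      hh₄ hh₄l)⟩

/-- sufficient condition for topological transitivity of the cosine operator
sequence. -/
theorem stmt5 {X : Type*} [TopologicalSpace X] [MeasurableSpace X] [BorelSpace X]
    {F : Type*} [NormedAddCommGroup F] [NormedSpace ℂ F] [CompleteSpace F]
    (B : BanachFunctionSpace X F) (α : X ≃ X)
    (hmα : Measurable (⇑α)) (hmαs : Measurable (⇑α.symm))
    (hΩ : B.ConditionOmega α)
    (w : X → ℝ) (hw : IsWeightPair w) (T : F →L[ℂ] F)
    (hT : ∀ (f : F) (x : X), B.toFunL (T f) x = (w x : ℂ) * B.toFunL f (α x)) (S : F →L[ℂ] F) (hST : ∀ f : F, S (T f) = f) (hTS : ∀ f : F, T (S f) = f)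
    (hcond : ∀ K : Set X, IsCompact K →
      ∃ (D E' F' : ℕ → Set X) (nk : ℕ → ℕ) (g h₁ h₂ h₃ h₄ : ℕ → F),
        (∀ k, MeasurableSet (D k) ∧ MeasurableSet (E' k) ∧ MeasurableSet (F' k)) ∧
        (∀ k, D k ⊆ K) ∧ (∀ k, E' k ⊆ K) ∧ (∀ k, F' k ⊆ K) ∧
        (∀ k, D k = E' k ∪ F' k) ∧ (∀ k, E' k ∩ F' k = ∅) ∧
        StrictMono nk ∧ (∀ k, 0 < nk k) ∧
        (∀ k, B.toFunL (g k) = Set.indicator (K \ D k) 1) ∧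
        Tendsto (fun k => ‖g k‖) atTop (𝓝 0) ∧
        (∀ k, B.toFunL (h₁ k) = Set.indicator (D k)
          (fun x => ((∏ s ∈ Finset.Icc 1 (nk k), w ((⇑α.symm)^[s] x) : ℝ) : ℂ))) ∧
        Tendsto (fun k => ‖h₁ k‖) atTop (𝓝 0) ∧
        (∀ k, B.toFunL (h₂ k) = Set.indicator (D k)
          (fun x => (((∏ s ∈ Finset.range (nk k), w ((⇑α)^[s] x))⁻¹ : ℝ) : ℂ))) ∧
        Tendsto (fun k => ‖h₂ k‖) atTop (𝓝 0) ∧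
        (∀ k, B.toFunL (h₃ k) = Set.indicator (E' k)
          (fun x => ((∏ s ∈ Finset.Icc 1 (2 * nk k), w ((⇑α.symm)^[s] x) : ℝ) : ℂ))) ∧
        Tendsto (fun k => ‖h₃ k‖) atTop (𝓝 0) ∧
        (∀ k, B.toFunL (h₄ k) = Set.indicator (F' k)
          (fun x => (((∏ s ∈ Finset.range (2 * nk k), w ((⇑α)^[s] x))⁻¹ : ℝ) : ℂ))) ∧
        Tendsto (fun k => ‖h₄ k‖) atTop (𝓝 0)) :
    TopTransitive (cosOp T S) :=
  stmt5_general B α hΩ w hw T hT S hST hTS hcond
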